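/- arXiv:2512.03015 — 5 statements merged into one kernel-verified Lean document; each statement's English description precedes it below -/
import Mathlib

section
/- Two elements g₁, g₂ ∈ ℂ[x, x⁻¹] form a free basis of ℂ[x, x⁻¹] as a module over ℂ[x, x⁻¹]^W if and only if the determinant of their Gram matrix with respect to the pairing (f, g) = (fg − w₀(fg))/(x − x⁻¹) is a nonzero constant in ℂ. -/
open LaurentPolynomial

/-- The involution `w₀` of `ℂ[x, x⁻¹]` sending `x ↦ x⁻¹`. -/
noncomputable def w0 : LaurentPolynomial ℂ ≃ₐ[ℂ] LaurentPolynomial ℂ :=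
  AddMonoidAlgebra.domCongr ℂ ℂ (AddEquiv.neg ℤ)

private lemma w0_T (n : ℤ) : w0 (T n : LaurentPolynomial ℂ) = T (-n) := by
  show invert _ = _; simp

private lemma w0_C (c : ℂ) : w0 (C c : LaurentPolynomial ℂ) = C c := by
  show invert _ = _; simp

private lemma w0_w0 (f : LaurentPolynomial ℂ) : w0 (w0 f) = f :=
  involutive_invert f

private lemma D_ne : (T 1 - T (-1) : LaurentPolynomial ℂ) ≠ 0 := by
  intro h
  rw [sub_eq_zero] at h
  have := congrArg (fun p : LaurentPolynomial ℂ => p.coeff 1) h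
  norm_num at this

private lemma T_ne_T_neg (n : ℤ) (hn : n ≠ 0) : (T n : LaurentPolynomial ℂ) ≠ T (-n) := by
  intro h
  have := congrArg (fun p : LaurentPolynomial ℂ => p.coeff n) h
  norm_num at this
  omega

private lemma cancelD {a b : LaurentPolynomial ℂ}
    (h : a * (T 1 - T (-1)) = b * (T 1 - T (-1))) : a = b :=
  mul_right_cancel₀ D_ne h

/-- An invariant unit of `ℂ[x,x⁻¹]` is a nonzero constant. -/
private lemma inv_unit_eq_C {u v : LaurentPolynomial ℂ} (hinv : w0 u = u)
    (huv : u * v = 1) : ∃ k : ℂ, k ≠ 0 ∧ u = C k := by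
  obtain ⟨n, p, hp⟩ := exists_T_pow u
  obtain ⟨m, q, hq⟩ := exists_T_pow v
  have hpq : Polynomial.toLaurent (p * q) =
      Polynomial.toLaurent ((Polynomial.X : Polynomial ℂ) ^ (n + m)) := by
    rw [map_mul, hp, hq, Polynomial.toLaurent_X_pow]
    calc u * T ↑n * (v * T ↑m) = (u * v) * (T ↑n * T ↑m) := by ring
    _ = T ↑(n + m) := by rw [huv, one_mul, ← T_add]; norm_num
  have hpq' : p * q = Polynomial.X ^ (n + m) := Polynomial.toLaurent_injective hpq
  obtain ⟨i, hi, hass⟩ := (dvd_prime_pow Polynomial.prime_X (n + m)).mp ⟨q, hpq'.symm⟩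
  obtain ⟨e, he⟩ := hass
  obtain ⟨r, hr, hre⟩ := Polynomial.isUnit_iff.mp e.isUnit
  -- `p * C r = X ^ i`, hence `u * T n * C r = T i`, hence `u * C r = T (i - n)`
  have h1 : u * T ↑n * C r = T ↑i := by
    rw [← hp, ← Polynomial.toLaurent_C, ← map_mul, hre, he, Polynomial.toLaurent_X_pow]
  have h2 : u * C r = T (↑i - ↑n) := by
    have h3 : u * C r * T ↑n = T (↑i - ↑n) * T ↑n := by
      rw [T_sub, mul_assoc, mul_comm (C r) (T ↑n), ← mul_assoc, h1, mul_assoc, ← T_add]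
      norm_num
    exact (isUnit_T ↑n).mul_right_cancel h3
  have hrne : r ≠ 0 := hr.ne_zero
  have hinv2 : w0 (u * C r) = u * C r := by rw [map_mul, hinv, w0_C]
  have hzero : (↑i - ↑n : ℤ) = 0 := by
    by_contra hne
    exact T_ne_T_neg _ hne (by rw [← h2, ← hinv2, h2, w0_T]) 
  rw [hzero, T_zero] at h2
  refine ⟨r⁻¹, inv_ne_zero hrne, ?_⟩
  have : u * C r * C r⁻¹ = C r⁻¹ := by rw [h2, one_mul]
  rwa [mul_assoc, ← map_mul, mul_inv_cancel₀ hrne, map_one, mul_one] at this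

section PairLemmas

variable (pair : LaurentPolynomial ℂ → LaurentPolynomial ℂ → LaurentPolynomial ℂ)
variable (hpair : ∀ f g, pair f g * (T 1 - T (-1)) = f * g - w0 (f * g))

include hpair

private lemma pair_eq (f g q : LaurentPolynomial ℂ)
    (h : q * (T 1 - T (-1)) = f * g - w0 (f * g)) : pair f g = q :=
  cancelD (by rw [hpair, h])

private lemma pair_inv (f g : LaurentPolynomial ℂ) : w0 (pair f g) = pair f g := by
  apply cancelD
  have h := congrArg w0 (hpair f g)
  simp only [map_mul, map_sub, w0_T, w0_w0, neg_neg] at h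
  rw [hpair, map_mul]
  linear_combination -h

/-- Every Laurent polynomial decomposes as `p + q·x` with `p, q` invariant. -/
private lemma exists_coords (f : LaurentPolynomial ℂ) :
    ∃ p q : LaurentPolynomial ℂ, w0 p = p ∧ w0 q = q ∧ f = p + q * T 1 := by
  refine ⟨pair (T 1) f - (T 1 + T (-1)) * pair 1 f, pair 1 f, ?_, ?_, ?_⟩
  · simp only [map_sub, map_mul, map_add, w0_T, pair_inv pair hpair]
    norm_num
    exact Or.inl (add_comm _ _)
  · exact pair_inv pair hpair 1 f
  · have hu := hpair (T 1) f
    have hv := hpair 1 f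
    rw [one_mul] at hv
    rw [map_mul, w0_T] at hu
    apply cancelD (a := f)
    linear_combination -hu + T (-1) * hv

private lemma pair_formula (p q r s : LaurentPolynomial ℂ)
    (hp : w0 p = p) (hq : w0 q = q) (hr : w0 r = r) (hs : w0 s = s) :
    pair (p + q * T 1) (r + s * T 1) =
      (p * s + q * r) + q * s * (T 1 + T (-1)) := by
  apply pair_eq pair hpair
  have : w0 ((p + q * T 1) * (r + s * T 1)) = (p + q * T (-1)) * (r + s * T (-1)) := by
    simp only [map_mul, map_add, w0_T, hp, hq, hr, hs]
  rw [this]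
  ring

end PairLemmas

private lemma uniq_coords (p q : LaurentPolynomial ℂ) (hp : w0 p = p) (hq : w0 q = q)
    (h : p + q * T 1 = 0) : p = 0 ∧ q = 0 := by
  have h2 := congrArg w0 h
  simp only [map_add, map_mul, hp, hq, w0_T, map_zero] at h2
  have hq0 : q * (T 1 - T (-1)) = 0 := by linear_combination h - h2
  rcases mul_eq_zero.mp hq0 with h' | h'
  · constructor
    · rw [h', zero_mul, add_zero] at h; exact h
    · exact h'
  · exact absurd h' D_ne

/-- `g₁, g₂` form a free basis of `ℂ[x,x⁻¹]` over `ℂ[x+x⁻¹]` iff the determinant of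
their Gram matrix for the pairing `(f, g) = (fg − w₀(fg))/(x − x⁻¹)` is a nonzero
constant.  The pairing is encoded by a function `pair` satisfying
`pair f g · (x − x⁻¹) = fg − w₀(fg)`, which determines it uniquely. -/
theorem free_basis_iff_gram_det_nonzero_const
    (pair : LaurentPolynomial ℂ → LaurentPolynomial ℂ → LaurentPolynomial ℂ)
    (hpair : ∀ f g, pair f g * (T 1 - T (-1)) = f * g - w0 (f * g))
    (g₁ g₂ : LaurentPolynomial ℂ) :
    (∀ f : LaurentPolynomial ℂ,
      ∃! p : LaurentPolynomial ℂ × LaurentPolynomial ℂ,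
        (w0 p.1 = p.1 ∧ w0 p.2 = p.2) ∧ f = p.1 * g₁ + p.2 * g₂) ↔
    (∃ c : ℂ, c ≠ 0 ∧ pair g₁ g₁ * pair g₂ g₂ - pair g₁ g₂ * pair g₂ g₁ = C c) := by
  obtain ⟨a, b, ha, hb, hg1⟩ := exists_coords pair hpair g₁
  obtain ⟨c, d, hc, hd, hg2⟩ := exists_coords pair hpair g₂
  have hdet : pair g₁ g₁ * pair g₂ g₂ - pair g₁ g₂ * pair g₂ g₁
      = -(a * d - b * c) ^ 2 := by
    rw [hg1, hg2, pair_formula pair hpair a b a b ha hb ha hb,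
      pair_formula pair hpair c d c d hc hd hc hd,
      pair_formula pair hpair a b c d ha hb hc hd,
      pair_formula pair hpair c d a b hc hd ha hb]
    ring
  constructor
  · intro h
    obtain ⟨⟨p₁, p₂⟩, ⟨⟨hp₁, hp₂⟩, hpe⟩, -⟩ := h 1
    obtain ⟨⟨q₁, q₂⟩, ⟨⟨hq₁, hq₂⟩, hqe⟩, -⟩ := h (T 1)
    simp only at hpe hqe hp₁ hp₂ hq₁ hq₂
    -- coordinates of the relation `1 = p₁ g₁ + p₂ g₂`
    have h1 : ((p₁ * a + p₂ * c) - 1) + (p₁ * b + p₂ * d) * T 1 = 0 := by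
      rw [hg1, hg2] at hpe; linear_combination -hpe
    obtain ⟨e1, e2⟩ := uniq_coords _ _
      (by simp only [map_sub, map_add, map_mul, map_one, hp₁, hp₂, ha, hb, hc, hd])
      (by simp only [map_add, map_mul, hp₁, hp₂, ha, hb, hc, hd]) h1
    rw [sub_eq_zero] at e1
    -- coordinates of the relation `x = q₁ g₁ + q₂ g₂`
    have h2 : (q₁ * a + q₂ * c) + ((q₁ * b + q₂ * d) - 1) * T 1 = 0 := by
      rw [hg1, hg2] at hqe; linear_combination -hqe
    obtain ⟨e3, e4⟩ := uniq_coords _ _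
      (by simp only [map_add, map_mul, hq₁, hq₂, ha, hb, hc, hd])
      (by simp only [map_sub, map_add, map_mul, map_one, hq₁, hq₂, ha, hb, hc, hd]) h2
    rw [sub_eq_zero] at e4
    have key : (a * d - b * c) * (p₁ * q₂ - p₂ * q₁)
        = (p₁ * a + p₂ * c) * (q₁ * b + q₂ * d)
          - (p₁ * b + p₂ * d) * (q₁ * a + q₂ * c) := by ring
    rw [e1, e2, e3, e4] at key
    rw [one_mul, zero_mul, sub_zero] at key
    obtain ⟨k, hk, hu⟩ := inv_unit_eq_C
      (by simp only [map_sub, map_mul, ha, hb, hc, hd]) key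
    refine ⟨-k ^ 2, by simpa using pow_ne_zero 2 hk, ?_⟩
    rw [hdet, hu, map_neg, map_pow]
  · rintro ⟨c0, hc0, hdet0⟩
    rw [hdet] at hdet0
    have hsq' : (a * d - b * c) ^ 2 = C (-c0) := by rw [map_neg, ← hdet0]; ring
    have hsq : (a * d - b * c) * ((a * d - b * c) * C (-c0)⁻¹) = 1 := by
      rw [← mul_assoc, ← sq, hsq', ← map_mul, mul_inv_cancel₀ (neg_ne_zero.mpr hc0), map_one]
    have hune : (a * d - b * c) ≠ 0 := left_ne_zero_of_mul_eq_one hsq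
    obtain ⟨k, hk, hu⟩ := inv_unit_eq_C
      (by simp only [map_sub, map_mul, ha, hb, hc, hd]) hsq
    have hCk_ne : (C k : LaurentPolynomial ℂ) ≠ 0 := hu ▸ hune
    have hkk : (C k⁻¹ : LaurentPolynomial ℂ) * C k = 1 := by
      rw [← map_mul, inv_mul_cancel₀ hk, map_one]
    intro f
    obtain ⟨p, q, hp, hq, hf⟩ := exists_coords pair hpair f
    set A := C k⁻¹ * (d * p - c * q) with hA
    set B := C k⁻¹ * (a * q - b * p) with hB
    have hfe : f = A * g₁ + B * g₂ := by
      have hbig : A * (a + b * T 1) + B * (c + d * T 1)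
          = C k⁻¹ * ((p + q * T 1) * (a * d - b * c)) := by rw [hA, hB]; ring
      rw [hu, show C k⁻¹ * ((p + q * T 1) * C k) = (p + q * T 1) * (C k⁻¹ * C k) from by
        ring, hkk, mul_one] at hbig
      rw [hg1, hg2, hf, hbig]
    refine ⟨(A, B), ⟨⟨?_, ?_⟩, hfe⟩, ?_⟩
    · simp only [hA, map_mul, map_sub, w0_C, hp, hq, hc, hd]
    · simp only [hB, map_mul, map_sub, w0_C, hp, hq, ha, hb]
    · rintro ⟨y₁, y₂⟩ ⟨⟨hy₁, hy₂⟩, hyf⟩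
      simp only at hy₁ hy₂ hyf
      have h0 : ((y₁ - A) * a + (y₂ - B) * c) + ((y₁ - A) * b + (y₂ - B) * d) * T 1 = 0 := by
        rw [hg1, hg2] at hyf hfe
        linear_combination hfe - hyf
      obtain ⟨h1, h2⟩ := uniq_coords _ _
        (by simp only [map_add, map_mul, map_sub, hy₁, hy₂, ha, hc]
            rw [show w0 A = A from by simp only [hA, map_mul, map_sub, w0_C, hp, hq, hc, hd],
              show w0 B = B from by simp only [hB, map_mul, map_sub, w0_C, hp, hq, ha, hb]])
        (by simp only [map_add, map_mul, map_sub, hy₁, hy₂, hb, hd]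
            rw [show w0 A = A from by simp only [hA, map_mul, map_sub, w0_C, hp, hq, hc, hd],
              show w0 B = B from by simp only [hB, map_mul, map_sub, w0_C, hp, hq, ha, hb]])
        h0
      have hy1 : (y₁ - A) * C k = 0 := by linear_combination d * h1 - c * h2 - (y₁ - A) * hu
      have hy2 : (y₂ - B) * C k = 0 := by linear_combination a * h2 - b * h1 - (y₂ - B) * hu
      have : y₁ = A := by
        rcases mul_eq_zero.mp hy1 with h' | h'
        · exact sub_eq_zero.mp h'
        · exact absurd h' hCk_ne
      have : y₂ = B := by
        rcases mul_eq_zero.mp hy2 with h' | h'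
        · exact sub_eq_zero.mp h'
        · exact absurd h' hCk_ne
      exact Prod.ext ‹y₁ = A› ‹y₂ = B›
end

section
/- Let f, g: ℤ → ℂ. The function u: ℤ × ℤ → ℂ defined by u(n, t) = (f(n−t) + f(n+t))/2 + sgn(t)·(g(n+|t|−1) + g(n+|t|−3) + ⋯ + g(n−|t|+1)) is the unique solution of the discrete wave equation u(n, t+1) + u(n, t−1) = u(n+1, t) + u(n−1, t) satisfying u(n, 0) = f(n) and (u(n, 1) − u(n, −1))/2 = g(n) for all n. -/
/-!
Write `h` for a discrete antiderivative of `2g`, i.e. `h (k + 1) - h (k - 1) = 2 g k`, which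
exists by integrating separately along even and odd integers. The sum over `g` then telescopes,
and the proposed `u` is d'Alembert's formula
`u n t = (f + h) (n + t) / 2 + (f - h) (n - t) / 2`, a sum of two travelling waves, each of
which solves the wave equation. Uniqueness holds because the equation determines the row `t ± 1`
from the rows `t` and `t ∓ 1`, and the initial data determine the rows `t = 0` and `t = 1`.
-/

def DiscreteWave (u : ℤ → ℤ → ℂ) : Prop :=
  ∀ n t : ℤ, u n (t + 1) + u n (t - 1) = u (n + 1) t + u (n - 1) t

section Primitive

variable {M : Type*} [AddCommGroup M]

theorem Int.exists_add_one_sub_eq (q : ℤ → M) :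
    ∃ p : ℤ → M, ∀ k, p (k + 1) - p k = q k := by
  let up : ∀ k : ℤ, 0 ≤ k → M → M := fun k _ x => x + q k
  let down : ∀ k : ℤ, k ≤ 0 → M → M := fun k _ x => x - q (k - 1)
  let p : ℤ → M := fun k => k.inductionOn' (motive := fun _ => M) 0 0 up down
  refine ⟨p, fun k => ?_⟩
  rcases le_or_gt 0 k with hk | hk
  · simp only [p, Int.inductionOn'_add_one hk, up, add_sub_cancel_left]
  · have h := Int.inductionOn'_sub_one (motive := fun _ => M) (zero := 0) (succ := up)
      (pred := down) (show k + 1 ≤ 0 by omega)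
    rw [add_sub_cancel_right] at h
    simp only [p, h, down, add_sub_cancel_right, sub_sub_cancel]

theorem Int.exists_add_one_sub_sub_one_eq (q : ℤ → M) :
    ∃ h : ℤ → M, ∀ k, h (k + 1) - h (k - 1) = q k := by
  obtain ⟨p₀, hp₀⟩ := Int.exists_add_one_sub_eq fun m => q (2 * m + 1)
  obtain ⟨p₁, hp₁⟩ := Int.exists_add_one_sub_eq fun m => q (2 * m)
  refine ⟨fun k => if k % 2 = 0 then p₀ (k / 2) else p₁ ((k + 1) / 2), fun k => ?_⟩
  obtain ⟨m, rfl | rfl⟩ := Int.even_or_odd' k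
  · dsimp only
    rw [if_neg (by omega), if_neg (by omega), show (2 * m + 1 + 1) / 2 = m + 1 by omega,
      show (2 * m - 1 + 1) / 2 = m by omega, hp₁]
  · dsimp only
    rw [if_pos (by omega), if_pos (by omega), show (2 * m + 1 + 1) / 2 = m + 1 by omega,
      show (2 * m + 1 - 1) / 2 = m by omega, hp₀]

theorem sum_range_step_two_eq_sub {h q : ℤ → M} (hq : ∀ k, h (k + 1) - h (k - 1) = q k)
    (a : ℤ) (m : ℕ) : ∑ j ∈ Finset.range m, q (a + 1 + 2 * j) = h (a + 2 * m) - h a := by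
  have hstep (j : ℕ) : q (a + 1 + 2 * j) = h (a + 2 * (j + 1 : ℕ)) - h (a + 2 * j) := by
    rw [← hq]
    push_cast
    ring_nf
  rw [Finset.sum_congr rfl fun j _ => hstep j, Finset.sum_range_sub fun j : ℕ => h (a + 2 * j)]
  simp

end Primitive

theorem Int.sign_mul_sub_abs {R : Type*} [Ring R] (h : ℤ → R) (n t : ℤ) :
    (t.sign : R) * (h (n + |t|) - h (n - |t|)) = h (n + t) - h (n - t) := by
  rcases lt_trichotomy t 0 with ht | rfl | ht
  · simp [Int.sign_eq_neg_one_of_neg ht, abs_of_neg ht, sub_eq_add_neg]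
  · simp
  · simp [Int.sign_eq_one_of_pos ht, abs_of_pos ht]

theorem discreteWave_of_eq_add_sub (φ ψ : ℤ → ℂ) {u : ℤ → ℤ → ℂ}
    (hu : ∀ n t, u n t = φ (n + t) + ψ (n - t)) : DiscreteWave u := by
  intro n t
  simp only [hu]
  ring_nf

theorem DiscreteWave.eq_of_rows_zero_one {v w : ℤ → ℤ → ℂ} (hv : DiscreteWave v)
    (hw : DiscreteWave w) (h₀ : ∀ n, v n 0 = w n 0) (h₁ : ∀ n, v n 1 = w n 1) : v = w := by
  have key : ∀ t : ℤ, (∀ n, v n t = w n t) ∧ ∀ n, v n (t + 1) = w n (t + 1) := by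
    intro t
    induction t with
    | zero => simpa using ⟨h₀, h₁⟩
    | succ t ih =>
      refine ⟨ih.2, fun n => ?_⟩
      have hvn := hv n (t + 1)
      have hwn := hw n (t + 1)
      rw [add_sub_cancel_right] at hvn hwn
      linear_combination hvn - hwn + ih.2 (n + 1) + ih.2 (n - 1) - ih.1 n
    | pred t ih =>
      refine ⟨fun n => ?_, by simpa using ih.1⟩
      have hvn := hv n (-t)
      have hwn := hw n (-t)
      linear_combination hvn - hwn + ih.1 (n + 1) + ih.1 (n - 1) - ih.2 n
  funext n t
  exact (key t).1 n

theorem DiscreteWave.eq_of_initial {v w : ℤ → ℤ → ℂ} (hv : DiscreteWave v)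
    (hw : DiscreteWave w) (h₀ : ∀ n, v n 0 = w n 0)
    (h₁ : ∀ n, v n 1 - v n (-1) = w n 1 - w n (-1)) : v = w := by
  refine hv.eq_of_rows_zero_one hw h₀ fun n => ?_
  have hv₀ := hv n 0
  have hw₀ := hw n 0
  rw [zero_add, zero_sub] at hv₀ hw₀
  linear_combination (hv₀ - hw₀ + h₀ (n + 1) + h₀ (n - 1) + h₁ n) / 2

/-- The function
`u(n, t) = (f(n−t) + f(n+t))/2 + sgn(t)·(g(n+|t|−1) + g(n+|t|−3) + ⋯ + g(n−|t|+1))`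
is the unique solution of the discrete wave equation with `u(n, 0) = f(n)` and
`(u(n, 1) − u(n, −1))/2 = g(n)`. -/
theorem discrete_wave_unique_solution (f g : ℤ → ℂ) (u : ℤ → ℤ → ℂ)
    (hu : ∀ n t : ℤ, u n t =
      (f (n - t) + f (n + t)) / 2 +
        (t.sign : ℂ) * ∑ j ∈ Finset.range t.natAbs, g (n - |t| + 1 + 2 * (j : ℤ))) :
    DiscreteWave u ∧ (∀ n : ℤ, u n 0 = f n) ∧
      (∀ n : ℤ, (u n 1 - u n (-1)) / 2 = g n) ∧
      (∀ v : ℤ → ℤ → ℂ, DiscreteWave v → (∀ n : ℤ, v n 0 = f n) →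
        (∀ n : ℤ, (v n 1 - v n (-1)) / 2 = g n) → v = u) := by
  obtain ⟨h, hh⟩ := Int.exists_add_one_sub_sub_one_eq fun k => 2 * g k
  have hdAlembert :
      ∀ n t, u n t = (f (n + t) + h (n + t)) / 2 + (f (n - t) - h (n - t)) / 2 := by
    intro n t
    have hsum := sum_range_step_two_eq_sub hh (n - |t|) t.natAbs
    rw [← Finset.mul_sum, Int.natCast_natAbs, show n - |t| + 2 * |t| = n + |t| by ring] at hsum
    rw [hu]
    linear_combination Int.sign_mul_sub_abs h n t / 2 + (t.sign : ℂ) / 2 * hsum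
  have hwave : DiscreteWave u :=
    discreteWave_of_eq_add_sub (fun k => (f k + h k) / 2) (fun k => (f k - h k) / 2) hdAlembert
  have hu₀ : ∀ n, u n 0 = f n := fun n => by simp [hu]
  have hu₁ : ∀ n, (u n 1 - u n (-1)) / 2 = g n := fun n => by
    rw [hdAlembert, hdAlembert, sub_neg_eq_add, ← sub_eq_add_neg]
    linear_combination hh n / 2
  refine ⟨hwave, hu₀, hu₁, fun v hv hv₀ hv₁ => ?_⟩
  refine hv.eq_of_initial hwave (fun n => ?_) fun n => ?_
  · rw [hv₀, hu₀]
  · linear_combination 2 * (hv₁ n - hu₁ n)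
end

section
/- Finite speed of propagation: if u: ℤ × ℤ → ℂ solves the discrete wave equation with u(n, 0) = f(n) supported on |n| ≤ r and (u(n, 1) − u(n, −1))/2 = g(n) supported on |n| ≤ r + 1, then u(n, t) = 0 whenever |n| > r + |t|. -/
/-!
The recurrence `u(n, t+1) = u(n+1, t) + u(n-1, t) - u(n, t-1)` determines row `t + 1`
from rows `t` and `t - 1`, and moves the edge of the support out by at most one site per
time step; induction over pairs of consecutive rows gives the light cone forward in time.
The equation is invariant under `t ↦ -t`, which gives the backward cone. The two starting
rows `t = ±1` vanish outside `|n| ≤ r + 1` because their sum is `u(n+1, 0) + u(n-1, 0)` and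
their difference is `2 g(n)`.
-/

def IsDiscreteWave {M : Type*} [AddCommGroup M] (u : ℤ → ℤ → M) : Prop :=
  ∀ n t : ℤ, u n (t + 1) + u n (t - 1) = u (n + 1) t + u (n - 1) t

lemma lt_abs_of_add_one_lt_abs {r n m : ℤ} (h : r + 1 < |n|) (hmn : |m - n| ≤ 1) :
    r < |m| := by
  linarith [abs_sub_abs_le_abs_sub n m, abs_sub_comm m n]

namespace IsDiscreteWave

variable {M : Type*} [AddCommGroup M] {u : ℤ → ℤ → M}

lemma time_reversal (hu : IsDiscreteWave u) : IsDiscreteWave fun n t => u n (-t) := by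
  intro n t
  rw [add_comm]
  convert hu n (-t) using 3 <;> ring

lemma eq_zero_of_add_lt_abs {r : ℤ} (hu : IsDiscreteWave u)
    (h₀ : ∀ n, r < |n| → u n 0 = 0) (h₁ : ∀ n, r + 1 < |n| → u n 1 = 0) (t : ℕ) :
    ∀ n, r + t < |n| → u n t = 0 := by
  suffices ∀ t : ℕ, (∀ n, r + t < |n| → u n t = 0) ∧ (∀ n, r + (t + 1) < |n| → u n (t + 1) = 0)
    from (this t).1
  intro t
  induction t with
  | zero => simpa using And.intro h₀ h₁
  | succ t ih =>
    refine ⟨by exact_mod_cast ih.2, fun n hn => ?_⟩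
    have step : u n (t + 1 + 1) = u (n + 1) (t + 1) + u (n - 1) (t + 1) - u n t := by
      rw [← hu n (t + 1), add_sub_cancel_right, add_sub_cancel_right]
    have hn' : r + (t + 1) + 1 < |n| := by push_cast at hn; linarith
    push_cast
    rw [step, ih.2 _ (lt_abs_of_add_one_lt_abs hn' (by simp)),
      ih.2 _ (lt_abs_of_add_one_lt_abs hn' (by simp)), ih.1 n (by linarith), sub_zero, add_zero]

end IsDiscreteWave

/-- Finite speed of propagation for the discrete wave equation: if the standard
initial conditions `f(n) = u(n,0)` and `g(n) = (u(n,1) − u(n,−1))/2` are supported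
on `|n| ≤ r` and `|n| ≤ r + 1` respectively, then `u(n, t) = 0` for `|n| > r + |t|`. -/
theorem discrete_wave_finite_speed (u : ℤ → ℤ → ℂ) (f g : ℤ → ℂ) (r : ℤ)
    (hwave : ∀ n t : ℤ, u n (t + 1) + u n (t - 1) = u (n + 1) t + u (n - 1) t)
    (hf : ∀ n : ℤ, u n 0 = f n)
    (hg : ∀ n : ℤ, (u n 1 - u n (-1)) / 2 = g n)
    (hfsupp : ∀ n : ℤ, r < |n| → f n = 0)
    (hgsupp : ∀ n : ℤ, r + 1 < |n| → g n = 0) :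
    ∀ n t : ℤ, r + |t| < |n| → u n t = 0 := by
  have hu : IsDiscreteWave u := hwave
  have h₀ : ∀ n, r < |n| → u n 0 = 0 := fun n hn => (hf n).trans (hfsupp n hn)
  have h₁ : ∀ n, r + 1 < |n| → u n 1 = 0 ∧ u n (-1) = 0 := by
    intro n hn
    have hsum : u n 1 + u n (-1) = 0 := by
      have h := hwave n 0
      rw [h₀ (n + 1) (lt_abs_of_add_one_lt_abs hn (by simp)),
        h₀ (n - 1) (lt_abs_of_add_one_lt_abs hn (by simp))] at h
      simpa using h
    have hdiff : u n 1 - u n (-1) = 0 := by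
      simpa [hgsupp n hn] using hg n
    exact ⟨by linear_combination (hsum + hdiff) / 2, by linear_combination (hsum - hdiff) / 2⟩
  intro n t hnt
  obtain ⟨k, rfl | rfl⟩ := Int.eq_nat_or_neg t
  · exact hu.eq_zero_of_add_lt_abs h₀ (fun n hn => (h₁ n hn).1) k n (by simpa using hnt)
  · exact hu.time_reversal.eq_zero_of_add_lt_abs (by simpa using h₀) (fun n hn => (h₁ n hn).2) k n
      (by simpa using hnt)
end

section
/- Conservation of energy for the discrete wave equation: if u: ℤ × ℤ → ℂ solves u(n, t+1) + u(n, t−1) = u(n+1, t) + u(n−1, t) and has finitely supported standard initial conditions, then E(t) := Σₙ |(u(n+1, t) − u(n−1, t))/2|² + Σₙ |(u(n, t+1) − u(n, t−1))/2|² is independent of t. -/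
open Function

namespace DWEAux

noncomputable def A (u : ℤ → ℤ → ℂ) (n t : ℤ) : ℂ := u n (t + 1) - u (n + 1) t
noncomputable def B (u : ℤ → ℤ → ℂ) (n t : ℤ) : ℂ := u n (t + 1) - u (n - 1) t

variable (u : ℤ → ℤ → ℂ)
variable (hwave : ∀ n t : ℤ, u n (t + 1) + u n (t - 1) = u (n + 1) t + u (n - 1) t)

include hwave in
lemma hArec : ∀ n t : ℤ, A u n t = A u (n - 1) (t - 1) := by
  intro n t
  have e1 : t - 1 + 1 = t := by ring
  have e2 : n - 1 + 1 = n := by ring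
  simp only [A, e1, e2]
  linear_combination hwave n t

include hwave in
lemma hBrec : ∀ n t : ℤ, B u n t = B u (n + 1) (t - 1) := by
  intro n t
  have e1 : t - 1 + 1 = t := by ring
  have e2 : n + 1 - 1 = n := by ring
  simp only [B, e1, e2]
  linear_combination hwave n t

include hwave in
lemma atrans : ∀ t n : ℤ, A u n t = A u (n - t) 0 := by
  intro t
  induction t using Int.induction_on with
  | zero => intro n; simp
  | succ k ih =>
      intro n
      have h := hArec u hwave n (k + 1)
      have e : (k : ℤ) + 1 - 1 = k := by ring
      rw [e] at h
      rw [h, ih (n - 1)]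
      congr 1; ring
  | pred k ih =>
      intro n
      have h := hArec u hwave (n + 1) (-k)
      have e2 : n + 1 - 1 = n := by ring
      rw [e2] at h
      rw [← h, ih (n + 1)]
      congr 1; ring

include hwave in
lemma btrans : ∀ t n : ℤ, B u n t = B u (n + t) 0 := by
  intro t
  induction t using Int.induction_on with
  | zero => intro n; simp
  | succ k ih =>
      intro n
      have h := hBrec u hwave n (k + 1)
      have e : (k : ℤ) + 1 - 1 = k := by ring
      rw [e] at h
      rw [h, ih (n + 1)]
      congr 1; ring
  | pred k ih =>
      intro n
      have h := hBrec u hwave (n - 1) (-k)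
      have e2 : n - 1 + 1 = n := by ring
      rw [e2] at h
      rw [← h, ih (n - 1)]
      congr 1; ring

lemma par (a b : ℂ) : ‖(b - a) / 2‖ ^ 2 + ‖(a + b) / 2‖ ^ 2 = (‖a‖ ^ 2 + ‖b‖ ^ 2) / 2 := by
  have h2 : ‖(2 : ℂ)‖ = 2 := by norm_num
  rw [norm_div, norm_div, h2, div_pow, div_pow, norm_sub_rev b a]
  have hp := parallelogram_law_with_norm ℂ a b
  nlinarith [hp, sq_nonneg (‖a + b‖), sq_nonneg (‖a - b‖)]

end DWEAux

open DWEAux in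
/-- Conservation of energy for the discrete wave equation: if `u` solves
`u(n, t+1) + u(n, t−1) = u(n+1, t) + u(n−1, t)` with finitely supported standard
initial conditions, then
`E(t) = Σₙ |(u(n+1,t) − u(n−1,t))/2|² + Σₙ |(u(n,t+1) − u(n,t−1))/2|²`
is independent of `t`. -/
theorem discrete_wave_energy_conservation (u : ℤ → ℤ → ℂ)
    (hwave : ∀ n t : ℤ, u n (t + 1) + u n (t - 1) = u (n + 1) t + u (n - 1) t)
    (hf : (Function.support fun n : ℤ => u n 0).Finite)
    (hg : (Function.support fun n : ℤ => u n 1 - u n (-1)).Finite) :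
    ∀ t s : ℤ,
      ((∑' n : ℤ, ‖(u (n + 1) t - u (n - 1) t) / 2‖ ^ 2) +
        ∑' n : ℤ, ‖(u n (t + 1) - u n (t - 1)) / 2‖ ^ 2) =
      ((∑' n : ℤ, ‖(u (n + 1) s - u (n - 1) s) / 2‖ ^ 2) +
        ∑' n : ℤ, ‖(u n (s + 1) - u n (s - 1)) / 2‖ ^ 2) := by
  -- shifted finite supports
  have hshift : ∀ (c : ℤ) (f : ℤ → ℂ), (Function.support f).Finite →
      (Function.support fun n => f (n + c)).Finite := by
    intro c f hfin
    have : (Function.support fun n => f (n + c)) = (fun n => n + c) ⁻¹' Function.support f := by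
      ext n; simp [Function.support]
    rw [this]
    exact Set.Finite.preimage (Set.injOn_of_injective (add_left_injective c)) hfin
  -- u · 1 has finite support
  have h1 : (Function.support fun n : ℤ => u n 1).Finite := by
    have key : ∀ n : ℤ, u n 1 =
        ((u (n + 1) 0 + u (n - 1) 0) + (u n 1 - u n (-1))) / 2 := by
      intro n
      have h := hwave n 0
      have e1 : (0 : ℤ) + 1 = 1 := by ring
      have e2 : (0 : ℤ) - 1 = -1 := by ring
      rw [e1, e2] at h
      linear_combination h / 2
    refine Set.Finite.subset (((hshift 1 _ hf).union (hshift (-1) _ hf)).union hg) ?_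
    intro n hn
    simp only [Function.mem_support] at hn
    by_contra hc
    simp only [Set.mem_union, Function.mem_support, not_or, not_not] at hc
    apply hn
    rw [key n]
    have e3 : n + -1 = n - 1 := by ring
    rw [hc.1.1]
    rw [← e3, hc.1.2, hc.2]
    ring
  -- A and B have finite support at time 0
  have hA0 : (Function.support fun n : ℤ => A u n 0).Finite := by
    refine Set.Finite.subset (h1.union (hshift 1 _ hf)) ?_
    intro n hn
    simp only [Function.mem_support, A] at hn
    by_contra hc
    simp only [Set.mem_union, Function.mem_support, not_or, not_not] at hc
    apply hn
    have e : (0 : ℤ) + 1 = 1 := by ring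
    rw [e, hc.1, hc.2]; ring
  have hB0 : (Function.support fun n : ℤ => B u n 0).Finite := by
    refine Set.Finite.subset (h1.union (hshift (-1) _ hf)) ?_
    intro n hn
    simp only [Function.mem_support, B] at hn
    by_contra hc
    simp only [Set.mem_union, Function.mem_support, not_or, not_not] at hc
    apply hn
    have e : (0 : ℤ) + 1 = 1 := by ring
    have e3 : n + -1 = n - 1 := by ring
    rw [e, hc.1, ← e3, hc.2]; ring
  have hAt : ∀ t : ℤ, (Function.support fun n : ℤ => A u n t).Finite := by
    intro t
    have : (Function.support fun n : ℤ => A u n t)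
        ⊆ Function.support fun n : ℤ => A u (n + (-t)) 0 := by
      intro n hn
      simp only [Function.mem_support] at hn ⊢
      rw [atrans u hwave t n] at hn
      have e : n + -t = n - t := by ring
      rwa [e]
    exact Set.Finite.subset (hshift (-t) _ hA0) this
  have hBt : ∀ t : ℤ, (Function.support fun n : ℤ => B u n t).Finite := by
    intro t
    have : (Function.support fun n : ℤ => B u n t)
        ⊆ Function.support fun n : ℤ => B u (n + t) 0 := by
      intro n hn
      simp only [Function.mem_support] at hn ⊢
      rwa [btrans u hwave t n] at hn
    exact Set.Finite.subset (hshift t _ hB0) this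
  -- pointwise identities
  have hw : ∀ n t : ℤ, u (n + 1) t - u (n - 1) t = B u n t - A u n t := by
    intro n t; simp only [A, B]; ring
  have hv : ∀ n t : ℤ, u n (t + 1) - u n (t - 1) = A u n t + B u n t := by
    intro n t; simp only [A, B]; linear_combination -hwave n t
  -- summability
  have hsF : ∀ t : ℤ, Summable (fun n : ℤ => ‖(u (n + 1) t - u (n - 1) t) / 2‖ ^ 2) := by
    intro t
    apply summable_of_finite_support
    refine Set.Finite.subset ((hAt t).union (hBt t)) ?_
    intro n hn
    simp only [Function.mem_support] at hn
    by_contra hc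
    simp only [Set.mem_union, Function.mem_support, not_or, not_not] at hc
    apply hn
    rw [hw n t, hc.1, hc.2]; simp
  have hsG : ∀ t : ℤ, Summable (fun n : ℤ => ‖(u n (t + 1) - u n (t - 1)) / 2‖ ^ 2) := by
    intro t
    apply summable_of_finite_support
    refine Set.Finite.subset ((hAt t).union (hBt t)) ?_
    intro n hn
    simp only [Function.mem_support] at hn
    by_contra hc
    simp only [Set.mem_union, Function.mem_support, not_or, not_not] at hc
    apply hn
    rw [hv n t, hc.1, hc.2]; simp
  have hsA : ∀ t : ℤ, Summable (fun n : ℤ => ‖A u n t‖ ^ 2) := by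
    intro t
    apply summable_of_finite_support
    refine Set.Finite.subset (hAt t) ?_
    intro n hn
    simp only [Function.mem_support] at hn ⊢
    intro h; apply hn; rw [h]; simp
  have hsB : ∀ t : ℤ, Summable (fun n : ℤ => ‖B u n t‖ ^ 2) := by
    intro t
    apply summable_of_finite_support
    refine Set.Finite.subset (hBt t) ?_
    intro n hn
    simp only [Function.mem_support] at hn ⊢
    intro h; apply hn; rw [h]; simp
  -- the key identity
  have key : ∀ t : ℤ,
      ((∑' n : ℤ, ‖(u (n + 1) t - u (n - 1) t) / 2‖ ^ 2) +
        ∑' n : ℤ, ‖(u n (t + 1) - u n (t - 1)) / 2‖ ^ 2) =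
      ((∑' n : ℤ, ‖A u n 0‖ ^ 2) + ∑' n : ℤ, ‖B u n 0‖ ^ 2) / 2 := by
    intro t
    rw [← Summable.tsum_add (hsF t) (hsG t)]
    have step1 : (∑' n : ℤ, (‖(u (n + 1) t - u (n - 1) t) / 2‖ ^ 2 +
        ‖(u n (t + 1) - u n (t - 1)) / 2‖ ^ 2)) =
        ∑' n : ℤ, (‖A u n t‖ ^ 2 + ‖B u n t‖ ^ 2) / 2 := by
      apply tsum_congr
      intro n
      rw [hw n t, hv n t]
      exact par (A u n t) (B u n t)
    rw [step1, tsum_div_const, Summable.tsum_add (hsA t) (hsB t)]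
    have hAeq : (∑' n : ℤ, ‖A u n t‖ ^ 2) = ∑' n : ℤ, ‖A u n 0‖ ^ 2 := by
      rw [tsum_congr (fun n => by rw [atrans u hwave t n])]
      exact (Equiv.subRight t).tsum_eq (fun n => ‖A u n 0‖ ^ 2)
    have hBeq : (∑' n : ℤ, ‖B u n t‖ ^ 2) = ∑' n : ℤ, ‖B u n 0‖ ^ 2 := by
      rw [tsum_congr (fun n => by rw [btrans u hwave t n])]
      exact (Equiv.addRight t).tsum_eq (fun n => ‖B u n 0‖ ^ 2)
    rw [hAeq, hBeq]
  intro t s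
  rw [key t, key s]
end

section
/- Orthogonality of Bernstein–Szegő type polynomials: let h(ξ) = Σ_{i=n}^{m} a_i ξ^i be a real Laurent polynomial with a_n, a_m ≠ 0 such that h(ξ)/h(ξ⁻¹) has no poles on the closed unit disk. Define f_k(ξ) = (h(ξ)ξ^k − h(ξ⁻¹)ξ^{−k})/(ξ − ξ⁻¹). Then for all integers k, n ≥ 0 with k ≠ n, ∫_{S¹} f_k(ξ) f_n(ξ) · ((ξ − ξ⁻¹)(ξ⁻¹ − ξ)/(h(ξ)h(ξ⁻¹))) dθ = 0, where dθ is arclength measure on the unit circle. -/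
open Complex

open MeasureTheory intervalIntegral Metric

lemma bs_mem_cb (θ : ℝ) : exp (θ * I) ∈ Metric.closedBall (0:ℂ) 1 := by
  simp [Metric.mem_closedBall, Complex.norm_exp]

lemma bs_exp_zpow (N : ℤ) (θ : ℝ) : exp (θ * I) ^ N = exp ((N : ℂ) * (θ * I)) :=
  (Complex.exp_int_mul _ N).symm

lemma bs_cont_zpow (N : ℤ) : Continuous (fun θ : ℝ => exp (θ * I) ^ N) := by
  simp_rw [bs_exp_zpow]
  fun_prop

lemma bs_key_exp (N : ℤ) (hN : N ≠ 0) :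
    ∫ θ in (0:ℝ)..(2*Real.pi), exp (θ*I) ^ N = 0 := by
  simp_rw [bs_exp_zpow]
  have : ∀ θ : ℝ, (N : ℂ) * (θ * I) = ((N : ℂ) * I) * θ := by intro θ; ring
  simp_rw [this]
  rw [integral_exp_mul_complex (by simp [hN, I_ne_zero])]
  have : Complex.exp ((N : ℂ) * I * (2 * Real.pi)) = 1 := by
    have : (N : ℂ) * I * (2 * Real.pi) = N * (2 * Real.pi * I) := by ring
    rw [this, Complex.exp_int_mul, Complex.exp_two_pi_mul_I, one_zpow]
  simp [this]

lemma bs_key_zero (H : ℂ → ℂ) (hH : DifferentiableOn ℂ H (Metric.closedBall 0 1))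
    (M : ℕ) :
    ∫ θ in (0:ℝ)..(2*Real.pi), H (exp (θ*I)) * exp (θ*I) ^ (M+1) = 0 := by
  have hcont : ContinuousOn (fun z : ℂ => H z * z ^ M) (Metric.closedBall (0:ℂ) 1) :=
    hH.continuousOn.mul (continuousOn_pow M)
  have hdiff : ∀ z ∈ Metric.ball (0:ℂ) 1 \ (∅ : Set ℂ),
      DifferentiableAt ℂ (fun z : ℂ => H z * z ^ M) z := by
    intro z hz
    have hz' : Metric.closedBall (0:ℂ) 1 ∈ nhds z :=
      mem_nhds_iff.2 ⟨Metric.ball 0 1, Metric.ball_subset_closedBall, Metric.isOpen_ball, hz.1⟩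
    exact (hH.differentiableAt hz').mul (differentiableAt_pow M)
  have h0 := circleIntegral_eq_zero_of_differentiable_on_off_countable
    (zero_le_one) Set.countable_empty hcont hdiff
  rw [circleIntegral] at h0
  simp only [deriv_circleMap, circleMap, ofReal_one, one_mul, zero_add, smul_eq_mul] at h0
  have : ∀ θ : ℝ, exp (θ*I) * I * (H (exp (θ*I)) * exp (θ*I) ^ M)
      = I * (H (exp (θ*I)) * exp (θ*I) ^ (M+1)) := by
    intro θ; ring
  simp_rw [this] at h0
  rw [intervalIntegral.integral_const_mul] at h0
  simpa [I_ne_zero] using h0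

lemma bs_key_zero' (H : ℂ → ℂ) (hH : DifferentiableOn ℂ H (Metric.closedBall 0 1))
    (M : ℕ) :
    ∫ θ in (0:ℝ)..(2*Real.pi), H ((exp (θ*I))⁻¹) * exp (θ*I) ^ (-(M+1:ℤ)) = 0 := by
  set φ : ℝ → ℂ := fun θ => H (exp (θ*I)) * exp (θ*I) ^ (M+1) with hφ
  have hper : Function.Periodic φ (2*Real.pi) := by
    intro θ
    have key : exp (((θ:ℂ) + 2 * (Real.pi:ℂ)) * I) = exp (θ*I) := by
      rw [add_mul, Complex.exp_add, Complex.exp_two_pi_mul_I, mul_one]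
    simp [hφ, key]
  have heq : ∀ θ : ℝ, H ((exp (θ*I))⁻¹) * exp (θ*I) ^ (-(M+1:ℤ)) = φ (-θ) := by
    intro θ
    have h1 : exp ((↑(-θ):ℂ) * I) = (exp (θ*I))⁻¹ := by
      push_cast; rw [neg_mul, Complex.exp_neg]
    have h2 : exp (θ*I) ^ (-((M:ℤ)+1)) = (exp (θ*I))⁻¹ ^ (M+1) := by
      rw [show -((M:ℤ)+1) = -((M+1 : ℕ) : ℤ) by push_cast; ring, zpow_neg, zpow_natCast, inv_pow]
    simp only [hφ]
    rw [h1, h2]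
  simp_rw [heq]
  rw [intervalIntegral.integral_comp_neg, neg_zero]
  have h1 : (∫ θ in (-(2*Real.pi))..(-(2*Real.pi)+2*Real.pi), φ θ)
      = ∫ θ in (0:ℝ)..(0+2*Real.pi), φ θ := hper.intervalIntegral_add_eq _ _
  rw [show (-(2*Real.pi)+2*Real.pi : ℝ) = 0 by ring, zero_add] at h1
  rw [h1]
  exact bs_key_zero H hH M

lemma bs_mem_cb' (θ : ℝ) : (exp (θ * I))⁻¹ ∈ Metric.closedBall (0:ℂ) 1 := by
  simp [Metric.mem_closedBall, Complex.norm_exp, map_inv₀]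

lemma bs_cont_exp : Continuous (fun θ : ℝ => exp (θ * I)) := by fun_prop

lemma bs_cont_exp_inv : Continuous (fun θ : ℝ => (exp (θ * I))⁻¹) := by
  simp_rw [← Complex.exp_neg]; fun_prop

lemma bs_ae_ne : ∀ᵐ θ : ℝ, exp (θ * I) - (exp (θ * I))⁻¹ ≠ 0 := by
  rw [MeasureTheory.ae_iff]
  apply MeasureTheory.measure_mono_null
    (?_ : _ ⊆ Set.range (fun n : ℤ => (n : ℝ) * Real.pi))
  · exact (Set.countable_range _).measure_zero _
  · intro θ hθ
    simp only [Set.mem_setOf_eq, not_not] at hθ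
    have h1 : exp (θ * I) * exp (θ * I) = 1 := by
      have h := sub_eq_zero.1 hθ
      nth_rewrite 2 [h]
      exact mul_inv_cancel₀ (Complex.exp_ne_zero _)
    rw [← Complex.exp_add] at h1
    obtain ⟨n, hn⟩ := Complex.exp_eq_one_iff.1 h1
    refine ⟨n, ?_⟩
    have h2 : ((θ:ℂ) - (n:ℂ) * Real.pi) * (2 * I) = 0 := by linear_combination hn
    have hI : (2 : ℂ) * I ≠ 0 := by simp [I_ne_zero]
    have this : (θ : ℂ) = (n : ℂ) * Real.pi :=
      sub_eq_zero.1 ((mul_eq_zero.1 h2).resolve_right hI)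
    rw [show ((n:ℂ) * Real.pi) = (((n:ℝ) * Real.pi : ℝ) : ℂ) by push_cast; ring] at this
    exact (Complex.ofReal_inj.1 this).symm

lemma bs_alg (A B u v d : ℂ) (hA : A ≠ 0) (hB : B ≠ 0) (hu : u ≠ 0) (hv : v ≠ 0) (hd : d ≠ 0) :
    (A*u - B*u⁻¹)/d * ((A*v - B*v⁻¹)/d) * (d * -d / (A*B))
      = -(A/B*(u*v)) - B/A*(u*v)⁻¹ + u/v + v/u := by
  have h1 : (A*u - B*u⁻¹)/d * ((A*v - B*v⁻¹)/d) * (d * -d / (A*B))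
      = -((A*u - B*u⁻¹) * (A*v - B*v⁻¹)) / (A*B) := by
    field_simp
  have h2 : -((A*u - B*u⁻¹) * (A*v - B*v⁻¹))
      = (-(A/B*(u*v)) - B/A*(u*v)⁻¹ + u/v + v/u) * (A*B) := by
    simp only [mul_inv]
    field_simp
    ring_nf
  rw [h1, h2, mul_div_assoc, div_self (mul_ne_zero hA hB), mul_one]


/-- Orthogonality of Bernstein–Szegő type polynomials.  Let
`h(ξ) = Σ_{i=n}^{m} a_i ξ^i` be a real Laurent polynomial with `a_n, a_m ≠ 0` such
that `h(ξ)/h(ξ⁻¹)` has no poles on the closed unit disk (encoded by a holomorphic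
extension `H`).  With `f_k(ξ) = (h(ξ)ξ^k − h(ξ⁻¹)ξ^{−k})/(ξ − ξ⁻¹)`, for all
`k, l ≥ 0` with `k ≠ l` we have
`∫_{S¹} f_k f_l · (ξ − ξ⁻¹)(ξ⁻¹ − ξ)/(h(ξ)h(ξ⁻¹)) dθ = 0`. -/
theorem bernstein_szego_orthogonality (n m : ℤ) (hnm : n ≤ m) (a : ℤ → ℝ)
    (han : a n ≠ 0) (ham : a m ≠ 0) (h : ℂ → ℂ)
    (hh : ∀ ξ : ℂ, h ξ = ∑ i ∈ Finset.Icc n m, (a i : ℂ) * ξ ^ i)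
    (hnopole : ∃ H : ℂ → ℂ, DifferentiableOn ℂ H (Metric.closedBall 0 1) ∧
      ∀ z ∈ Metric.closedBall (0 : ℂ) 1, z ≠ 0 → h z⁻¹ ≠ 0 ∧ H z = h z / h z⁻¹)
    (f : ℤ → ℂ → ℂ)
    (hf : ∀ (k : ℤ) (ξ : ℂ),
      f k ξ = (h ξ * ξ ^ k - h ξ⁻¹ * ξ ^ (-k)) / (ξ - ξ⁻¹)) :
    ∀ k l : ℤ, 0 ≤ k → 0 ≤ l → k ≠ l →
      (∫ θ : ℝ in (0 : ℝ)..(2 * Real.pi),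
        f k (exp (θ * I)) * f l (exp (θ * I)) *
          ((exp (θ * I) - (exp (θ * I))⁻¹) * ((exp (θ * I))⁻¹ - exp (θ * I)) /
            (h (exp (θ * I)) * h ((exp (θ * I))⁻¹)))) = 0 := by
  intro k l hk hl hkl
  obtain ⟨H, hHd, hHs⟩ := hnopole
  set N : ℕ := (k + l - 1).toNat with hN
  have hNk : ((N : ℤ)) + 1 = k + l := by omega
  -- step 1: a.e. equality of integrands
  have hcongr : (∫ θ : ℝ in (0 : ℝ)..(2 * Real.pi),
        f k (exp (θ * I)) * f l (exp (θ * I)) *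
          ((exp (θ * I) - (exp (θ * I))⁻¹) * ((exp (θ * I))⁻¹ - exp (θ * I)) /
            (h (exp (θ * I)) * h ((exp (θ * I))⁻¹))))
      = ∫ θ : ℝ in (0 : ℝ)..(2 * Real.pi),
          (-(H (exp (θ*I)) * exp (θ*I) ^ (k+l))
            - H ((exp (θ*I))⁻¹) * exp (θ*I) ^ (-(k+l))
            + exp (θ*I) ^ (k-l) + exp (θ*I) ^ (l-k)) := by
    apply intervalIntegral.integral_congr_ae
    filter_upwards [bs_ae_ne] with θ hd _
    set ξ : ℂ := exp (θ * I) with hξdef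
    have hξ : ξ ≠ 0 := Complex.exp_ne_zero _
    have h1 := hHs ξ (bs_mem_cb θ) hξ
    have h2 := hHs ξ⁻¹ (bs_mem_cb' θ) (inv_ne_zero hξ)
    rw [inv_inv] at h2
    have hB : h ξ⁻¹ ≠ 0 := h1.1
    have hA : h ξ ≠ 0 := h2.1
    rw [hf, hf, h1.2, h2.2]
    have hu : ξ ^ k ≠ 0 := zpow_ne_zero _ hξ
    have hv : ξ ^ l ≠ 0 := zpow_ne_zero _ hξ
    rw [show (ξ⁻¹ - ξ) = -(ξ - ξ⁻¹) by ring]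
    simp only [zpow_neg, zpow_add₀ hξ, zpow_sub₀ hξ]
    exact bs_alg (h ξ) (h ξ⁻¹) (ξ ^ k) (ξ ^ l) (ξ - ξ⁻¹) hA hB hu hv hd
  rw [hcongr]
  -- step 2: split and evaluate
  have cH : Continuous fun θ : ℝ => H (exp (θ*I)) :=
    hHd.continuousOn.comp_continuous bs_cont_exp bs_mem_cb
  have cH' : Continuous fun θ : ℝ => H ((exp (θ*I))⁻¹) :=
    hHd.continuousOn.comp_continuous bs_cont_exp_inv bs_mem_cb'
  have i1 : IntervalIntegrable (fun θ : ℝ => -(H (exp (θ*I)) * exp (θ*I) ^ (k+l)))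
      MeasureTheory.volume 0 (2*Real.pi) :=
    ((cH.mul (bs_cont_zpow _)).neg).intervalIntegrable _ _
  have i2 : IntervalIntegrable (fun θ : ℝ => H ((exp (θ*I))⁻¹) * exp (θ*I) ^ (-(k+l)))
      MeasureTheory.volume 0 (2*Real.pi) :=
    (cH'.mul (bs_cont_zpow _)).intervalIntegrable _ _
  have i3 : IntervalIntegrable (fun θ : ℝ => exp (θ*I) ^ (k-l))
      MeasureTheory.volume 0 (2*Real.pi) := (bs_cont_zpow _).intervalIntegrable _ _
  have i4 : IntervalIntegrable (fun θ : ℝ => exp (θ*I) ^ (l-k))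
      MeasureTheory.volume 0 (2*Real.pi) := (bs_cont_zpow _).intervalIntegrable _ _
  have i12 : IntervalIntegrable (fun θ : ℝ => -(H (exp (θ*I)) * exp (θ*I) ^ (k+l))
      - H ((exp (θ*I))⁻¹) * exp (θ*I) ^ (-(k+l))) MeasureTheory.volume 0 (2*Real.pi) :=
    i1.sub i2
  have i123 : IntervalIntegrable (fun θ : ℝ => -(H (exp (θ*I)) * exp (θ*I) ^ (k+l))
      - H ((exp (θ*I))⁻¹) * exp (θ*I) ^ (-(k+l)) + exp (θ*I) ^ (k-l))
      MeasureTheory.volume 0 (2*Real.pi) := i12.add i3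
  rw [intervalIntegral.integral_add i123 i4,
      intervalIntegral.integral_add i12 i3,
      intervalIntegral.integral_sub i1 i2,
      intervalIntegral.integral_neg]
  have e1 : (∫ θ in (0:ℝ)..(2*Real.pi), H (exp (θ*I)) * exp (θ*I) ^ (k+l)) = 0 := by
    have key := bs_key_zero H hHd N
    simp_rw [show ∀ θ : ℝ, exp (θ*I) ^ (k+l) = exp (θ*I) ^ (N+1) from
      fun θ => by rw [show k+l = ((N+1 : ℕ) : ℤ) by omega, zpow_natCast]]
    exact key
  have e2 : (∫ θ in (0:ℝ)..(2*Real.pi), H ((exp (θ*I))⁻¹) * exp (θ*I) ^ (-(k+l))) = 0 := by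
    have key := bs_key_zero' H hHd N
    simp_rw [show ∀ θ : ℝ, exp (θ*I) ^ (-(k+l)) = exp (θ*I) ^ (-((N:ℤ)+1)) from
      fun θ => by rw [hNk]]
    exact key
  have e3 := bs_key_exp (k-l) (sub_ne_zero.2 hkl)
  have e4 := bs_key_exp (l-k) (sub_ne_zero.2 (Ne.symm hkl))
  rw [e1, e2, e3, e4]
  ring
end
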